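/- Let A be a unital ℂ-algebra and let φ̃ : A → G be a ℂ-linear map with φ̃(1) = 1, with G-valued cumulant functionals (κ̃_n)_{n≥1}. Let B be a unital subalgebra of A such that φ̃ is a trace on B, i.e., φ̃(bc) = φ̃(cb) for all b, c ∈ B. Then for every n ≥ 2 and all b_1, ..., b_n ∈ B one has the cyclic invariance κ̃_n(b_1, b_2, ..., b_n) = κ̃_n(b_2, b_3, ..., b_n, b_1). -/

import Mathlib

namespace InfFree

open scoped BigOperators

/-- `π` is a partition of `Fin n` into nonempty blocks. -/
def IsPartition {n : ℕ} (π : Finset (Finset (Fin n))) : Prop :=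
  (∀ V ∈ π, V.Nonempty) ∧ ∀ i : Fin n, ∃! V : Finset (Fin n), V ∈ π ∧ i ∈ V

/-- `π` is non-crossing: there are no `p < q < r < s` with `p, r` in one block and
`q, s` in another block. -/
def IsNonCrossing {n : ℕ} (π : Finset (Finset (Fin n))) : Prop :=
  ∀ p q r s : Fin n, p < q → q < r → r < s →
    ∀ V ∈ π, ∀ W ∈ π, p ∈ V → r ∈ V → q ∈ W → s ∈ W → V = W

open Classical in
/-- The finset `NC n` of non-crossing partitions of `Fin n`. -/
noncomputable def NC (n : ℕ) : Finset (Finset (Finset (Fin n))) :=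
  Finset.univ.filter fun π => IsPartition π ∧ IsNonCrossing π

/-- Restriction of an `n`-tuple to a subset `V ⊆ Fin n`, listed in increasing order. -/
def restrict {α : Type*} {n : ℕ} (a : Fin n → α) (V : Finset (Fin n)) :
    Fin V.card → α :=
  fun i => a (V.orderIsoOfFin rfl i).1

/-- `κ` is the family of `R`-valued non-crossing cumulant functionals of `φ`, i.e.
the moment-cumulant formulas hold. -/
def MomentCumulant {A : Type*} [Ring A] {R : Type*} [CommRing R]
    (φ : A → R) (κ : ∀ n : ℕ, (Fin n → A) → R) : Prop :=
  ∀ (n : ℕ), 1 ≤ n → ∀ a : Fin n → A,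
    φ (List.ofFn a).prod = ∑ π ∈ NC n, ∏ V ∈ π, κ V.card (restrict a V)

/-- `κ'` is the family of infinitesimal non-crossing cumulant functionals of
`(φ, φ')`, where `κ` is the family of non-crossing cumulant functionals of `φ`. -/
def InfMomentCumulant {A : Type*} [Ring A]
    (φ' : A → ℂ) (κ κ' : ∀ n : ℕ, (Fin n → A) → ℂ) : Prop :=
  ∀ (n : ℕ), 1 ≤ n → ∀ a : Fin n → A,
    φ' (List.ofFn a).prod =
      ∑ π ∈ NC n, ∑ V ∈ π,
        κ' V.card (restrict a V) * ∏ W ∈ π.erase V, κ W.card (restrict a W)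

/-- Consecutive indices are distinct. -/
def Alternating {n k : ℕ} (i : Fin n → Fin k) : Prop :=
  ∀ (m : ℕ) (h : m + 1 < n), i ⟨m, Nat.lt_of_succ_lt h⟩ ≠ i ⟨m + 1, h⟩

/-- Freeness of the family of subsets `S` with respect to `φ`. -/
def FreeSets {A : Type*} [Ring A] {k : ℕ} (φ : A → ℂ) (S : Fin k → Set A) : Prop :=
  ∀ (n : ℕ), 1 ≤ n → ∀ i : Fin n → Fin k, Alternating i →
    ∀ a : Fin n → A, (∀ m, a m ∈ S (i m)) → (∀ m, φ (a m) = 0) →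
      φ (List.ofFn a).prod = 0

/-- Infinitesimal freeness of the family of subsets `S` with respect to `(φ, φ')`. -/
def InfFreeSets {A : Type*} [Ring A] {k : ℕ} (φ φ' : A → ℂ) (S : Fin k → Set A) : Prop :=
  ∀ (n : ℕ) (hn : 1 ≤ n) (i : Fin n → Fin k), Alternating i →
    ∀ a : Fin n → A, (∀ m, a m ∈ S (i m)) → (∀ m, φ (a m) = 0) →
      φ (List.ofFn a).prod = 0 ∧
      ((Odd n ∧ ∀ m : Fin n, i m = i m.rev) →
        φ' (List.ofFn a).prod =
          (∏ j : Fin ((n - 1) / 2),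
              φ (a ⟨j, by have := j.isLt; omega⟩ *
                 a ⟨n - 1 - j, by have := j.isLt; omega⟩)) *
            φ' (a ⟨n / 2, by omega⟩)) ∧
      (¬(Odd n ∧ ∀ m : Fin n, i m = i m.rev) → φ' (List.ofFn a).prod = 0)

/-!
Strong induction on `n`. In the moment-cumulant formula for `φ (b₁ ⋯ bₙ)` the full partition
contributes `κₙ b` and every other non-crossing partition has only blocks of size `< n`.
Rotating the arguments corresponds to rotating the partition, a bijection of `NC n` fixing the
full partition, and each block of the rotated tuple lists the entries of the rotated block up to
a cyclic shift, which the smaller cumulants do not see by induction. The trace property makes the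
two moments equal, so the two remaining terms `κₙ` agree.
-/

open Finset

lemma mem_NC {n : ℕ} {π : Finset (Finset (Fin n))} :
    π ∈ NC n ↔ IsPartition π ∧ IsNonCrossing π := by
  classical
  simp [NC]

theorem _root_.List.IsRotated.filter {α : Type*} {l l' : List α} (h : l ~r l') (p : α → Bool) :
    l.filter p ~r l'.filter p := by
  obtain ⟨k, rfl⟩ := h
  rw [List.rotate_eq_drop_append_take_mod, List.filter_append]
  conv_lhs => rw [← List.take_append_drop (k % l.length) l]
  rw [List.filter_append]
  exact List.isRotated_append

theorem _root_.List.ofFn_comp_finRotate {α : Type*} {n : ℕ} (t : Fin n → α) :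
    List.ofFn (t ∘ finRotate n) = (List.ofFn t).rotate 1 := by
  cases n with
  | zero => simp
  | succ n =>
    rw [List.ofFn_succ', List.ofFn_succ, List.rotate_cons_succ, List.rotate_zero,
      List.concat_eq_append]
    simp

theorem _root_.List.finRange_map_finRotate (n : ℕ) :
    (List.finRange n).map (finRotate n) = (List.finRange n).rotate 1 := by
  rw [← List.ofFn_eq_map, ← List.ofFn_id]
  exact List.ofFn_comp_finRotate id

lemma ofFn_restrict {α : Type*} {n : ℕ} (a : Fin n → α) (V : Finset (Fin n)) :
    List.ofFn (restrict a V) = ((List.finRange n).filter (· ∈ V)).map a := by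
  have hsort : V.sort = (List.finRange n).filter (· ∈ V) :=
    (sortedLT_sort V).eq_of_mem_iff
      ((List.sortedLT_finRange n).pairwise.filter _).sortedLT (by simp)
  rw [← hsort, ← listMap_orderEmbOfFin_finRange V rfl, List.map_map, ← List.ofFn_eq_map]
  rfl

lemma isRotated_ofFn_restrict_comp_finRotate {α : Type*} {n : ℕ} (a : Fin n → α)
    (V : Finset (Fin n)) :
    List.ofFn (restrict (a ∘ finRotate n) V) ~r
      List.ofFn (restrict a ((finRotate n).finsetCongr V)) := by
  have hblock : ((List.finRange n).filter (· ∈ V)).map (finRotate n) =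
      ((List.finRange n).rotate 1).filter (· ∈ (finRotate n).finsetCongr V) := by
    rw [← List.finRange_map_finRotate, List.filter_map]
    congr 2
    funext i
    simp only [Function.comp_apply, Equiv.finsetCongr_apply, Finset.mem_map_equiv,
      Equiv.symm_apply_apply]
  rw [ofFn_restrict, ofFn_restrict, ← List.map_map, hblock]
  exact ((List.IsRotated.forall _ 1).filter _).map a

section Partitions

variable {n : ℕ} {π : Finset (Finset (Fin n))}

lemma IsPartition.map_equiv (hπ : IsPartition π) (e : Fin n ≃ Fin n) :
    IsPartition (e.finsetCongr.finsetCongr π) := by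
  refine ⟨?_, fun i => ?_⟩
  · simp only [Equiv.finsetCongr_apply, Finset.mem_map, Equiv.coe_toEmbedding]
    rintro _ ⟨V, hV, rfl⟩
    exact (hπ.1 V hV).map
  · obtain ⟨V, ⟨hV, hiV⟩, huniq⟩ := hπ.2 (e.symm i)
    refine ⟨e.finsetCongr V, ⟨mem_map_of_mem _ hV, ?_⟩, ?_⟩
    · simpa [Equiv.finsetCongr_apply, Finset.mem_map_equiv] using hiV
    · simp only [Equiv.finsetCongr_apply, Finset.mem_map, Equiv.coe_toEmbedding, and_imp,
        forall_exists_index]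
      rintro _ W hW rfl hiW
      rw [huniq W ⟨hW, by simpa [Equiv.finsetCongr_apply, Finset.mem_map_equiv] using hiW⟩]

lemma IsPartition.eq_singleton_univ (hπ : IsPartition π) (hu : univ ∈ π) : π = {univ} := by
  refine eq_singleton_iff_unique_mem.2 ⟨hu, fun W hW => ?_⟩
  obtain ⟨w, hw⟩ := hπ.1 W hW
  exact (hπ.2 w).unique ⟨hW, hw⟩ ⟨hu, mem_univ w⟩

lemma IsPartition.card_lt (hπ : IsPartition π) (hne : π ≠ {univ}) {V : Finset (Fin n)}
    (hV : V ∈ π) : V.card < n := by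
  refine (card_le_univ V).trans_eq (Fintype.card_fin n) |>.lt_of_ne fun hcard => hne ?_
  rw [eq_univ_of_card V (by simpa using hcard)] at hV
  exact hπ.eq_singleton_univ hV

lemma singleton_univ_mem_NC (n : ℕ) : ({univ} : Finset (Finset (Fin (n + 1)))) ∈ NC (n + 1) := by
  refine mem_NC.2 ⟨⟨?_, fun i => ⟨univ, by simp, by simp⟩⟩, ?_⟩
  · simp
  · intro p q r s _ _ _ V hV W hW _ _ _ _
    rw [mem_singleton.1 hV, mem_singleton.1 hW]

lemma IsNonCrossing.map_finRotate {π : Finset (Finset (Fin (n + 1)))} (hπ : IsNonCrossing π) :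
    IsNonCrossing ((finRotate (n + 1)).finsetCongr.finsetCongr π) := by
  set σ := finRotate (n + 1)
  have hval : ∀ i : Fin (n + 1), i ≠ 0 → ((σ.symm i : Fin (n + 1)) : ℕ) = i - 1 :=
    fun i hi => coe_finRotate_symm_of_ne_zero hi
  have hzero : σ.symm 0 = Fin.last n := by rw [Equiv.symm_apply_eq, finRotate_last]
  intro p q r s hpq hqr hrs V' hV' W' hW' hp hr hq hs
  simp only [Finset.mem_map, Equiv.coe_toEmbedding, Equiv.finsetCongr_apply] at hV' hW'
  obtain ⟨V, hV, rfl⟩ := hV'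
  obtain ⟨W, hW, rfl⟩ := hW'
  simp only [Finset.mem_map_equiv] at hp hr hq hs
  congr 1
  have hq0 : q ≠ 0 := (lt_of_le_of_lt (Fin.zero_le p) hpq).ne'
  have hr0 : r ≠ 0 := (lt_of_le_of_lt (Fin.zero_le p) (hpq.trans hqr)).ne'
  have hs0 : s ≠ 0 := (lt_of_le_of_lt (Fin.zero_le p) (hpq.trans (hqr.trans hrs))).ne'
  rw [Fin.lt_def] at hpq hqr hrs
  have hsn := s.isLt
  by_cases hp0 : p = 0
  · -- `σ⁻¹ p` is the last point, so the crossing reappears cyclically shifted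
    rw [hp0, hzero] at hp
    refine (hπ _ _ _ _ ?_ ?_ ?_ W hW V hV hq hs hr hp).symm <;>
      simp only [Fin.lt_def, hval _ hq0, hval _ hr0, hval _ hs0, Fin.val_last] <;> omega
  · have hp1 := Fin.val_ne_zero_iff.2 hp0
    refine hπ _ _ _ _ ?_ ?_ ?_ V hV W hW hp hr hq hs <;>
      simp only [Fin.lt_def, hval _ hp0, hval _ hq0, hval _ hr0, hval _ hs0] <;> omega

lemma NC_map_finRotate (n : ℕ) :
    (NC (n + 1)).map (finRotate (n + 1)).finsetCongr.finsetCongr.toEmbedding = NC (n + 1) := by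
  refine eq_of_subset_of_card_le (fun π' hπ' => ?_) (card_map _).ge
  obtain ⟨π, hπ, rfl⟩ := mem_map.1 hπ'
  rw [mem_NC] at hπ ⊢
  exact ⟨hπ.1.map_equiv _, hπ.2.map_finRotate⟩

end Partitions

lemma map_prod_rotate_one {M N : Type*} [Monoid M] (f : M → N) {S : Submonoid M}
    (htrace : ∀ b ∈ S, ∀ c ∈ S, f (b * c) = f (c * b)) {l : List M} (hl : ∀ x ∈ l, x ∈ S) :
    f (l.rotate 1).prod = f l.prod := by
  cases l with
  | nil => rfl
  | cons x l =>
    rw [List.rotate_cons_succ, List.rotate_zero, List.prod_append, List.prod_singleton,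
      List.prod_cons]
    exact htrace _ (S.list_prod_mem fun y hy => hl y (List.mem_cons_of_mem x hy)) _
      (hl x List.mem_cons_self)

section Cumulants

variable {A R : Type*} (κ : ∀ n : ℕ, (Fin n → A) → R)

lemma cumulant_congr_ofFn {m m' : ℕ} {t : Fin m → A} {t' : Fin m' → A}
    (h : List.ofFn t = List.ofFn t') : κ m t = κ m' t' := by
  obtain rfl : m = m' := by simpa using congrArg List.length h
  rw [List.ofFn_injective h]

lemma cumulant_eq_of_isRotated {S : Set A} {m : ℕ}
    (hcyc : ∀ t : Fin m → A, (∀ i, t i ∈ S) → κ m t = κ m (t ∘ finRotate m))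
    {t : Fin m → A} (ht : ∀ i, t i ∈ S) {m' : ℕ} {t' : Fin m' → A}
    (h : List.ofFn t ~r List.ofFn t') : κ m t = κ m' t' := by
  obtain ⟨k, hk⟩ := h
  induction k generalizing t with
  | zero => exact cumulant_congr_ofFn κ (by simpa using hk)
  | succ k ih =>
    rw [hcyc t ht]
    refine ih (fun i => ht _) ?_
    rw [List.ofFn_comp_finRotate, List.rotate_rotate, add_comm, hk]
lemma prod_singleton_univ_restrict [CommMonoid R] {n : ℕ} (a : Fin n → A) :
    ∏ V ∈ ({univ} : Finset (Finset (Fin n))), κ V.card (restrict a V) = κ n a := by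
  rw [prod_singleton]
  refine cumulant_congr_ofFn κ ?_
  rw [ofFn_restrict, List.ofFn_eq_map]
  simp

lemma sum_erase_prod_restrict_comp_finRotate [CommSemiring R] {S : Set A} {n : ℕ}
    (hcyc : ∀ m < n + 1, ∀ t : Fin m → A, (∀ i, t i ∈ S) → κ m t = κ m (t ∘ finRotate m))
    (b : Fin (n + 1) → A) (hb : ∀ i, b i ∈ S) :
    ∑ π ∈ (NC (n + 1)).erase {univ}, ∏ V ∈ π, κ V.card (restrict (b ∘ finRotate (n + 1)) V) =
      ∑ π ∈ (NC (n + 1)).erase {univ}, ∏ V ∈ π, κ V.card (restrict b V) := by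
  have he : (finRotate (n + 1)).finsetCongr.finsetCongr.toEmbedding {univ} = {univ} := by
    simp [Equiv.finsetCongr_apply]
  conv_rhs => rw [← NC_map_finRotate n, ← he, ← map_erase, sum_map]
  refine sum_congr rfl fun π hπ => ?_
  obtain ⟨hne, hπNC⟩ := mem_erase.1 hπ
  rw [Equiv.coe_toEmbedding, Equiv.finsetCongr_apply, prod_map]
  refine prod_congr rfl fun V hV => ?_
  exact cumulant_eq_of_isRotated κ (hcyc _ ((mem_NC.1 hπNC).1.card_lt hne hV))
    (fun i => hb _) (isRotated_ofFn_restrict_comp_finRotate b V)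

end Cumulants

theorem MomentCumulant.apply_comp_finRotate {A R : Type*} [Ring A] [CommRing R] {φ : A → R}
    {κ : ∀ n : ℕ, (Fin n → A) → R} (hκ : MomentCumulant φ κ) {S : Submonoid A}
    (htrace : ∀ b ∈ S, ∀ c ∈ S, φ (b * c) = φ (c * b)) (n : ℕ) (b : Fin n → A)
    (hb : ∀ i, b i ∈ S) : κ n b = κ n (b ∘ finRotate n) := by
  induction n using Nat.strong_induction_on with
  | _ n ih =>
    rcases n with _ | n
    · exact congrArg (κ 0) (Subsingleton.elim _ _)
    have hmoment : φ (List.ofFn (b ∘ finRotate (n + 1))).prod = φ (List.ofFn b).prod := by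
      rw [List.ofFn_comp_finRotate]
      exact map_prod_rotate_one φ htrace (List.forall_mem_ofFn_iff.2 hb)
    have hrest := sum_erase_prod_restrict_comp_finRotate κ (S := S) ih b hb
    have hb' := hκ (n + 1) n.succ_pos b
    have hbσ := hκ (n + 1) n.succ_pos (b ∘ finRotate (n + 1))
    rw [← add_sum_erase _ _ (singleton_univ_mem_NC n), prod_singleton_univ_restrict] at hb' hbσ
    linear_combination hbσ - hb' - hmoment + hrest

theorem grassmann_cumulant_cyclic_of_trace_general
    {A : Type*} [Ring A] [Algebra ℂ A]
    (φ : A →ₗ[ℂ] DualNumber ℂ)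
    (κ : ∀ n : ℕ, (Fin n → A) → DualNumber ℂ)
    (hκ : MomentCumulant (⇑φ) κ)
    (B : Subalgebra ℂ A)
    (htrace : ∀ b ∈ B, ∀ c ∈ B, φ (b * c) = φ (c * b)) :
    ∀ (n : ℕ), 2 ≤ n → ∀ b : Fin n → A, (∀ m, b m ∈ B) →
      κ n b = κ n (fun m => b (finRotate n m)) :=
  fun n _ b hb => hκ.apply_comp_finRotate (S := B.toSubmonoid) htrace n b hb

/-- If `φ̃ : A → G` restricts to a trace on a unital subalgebra
`B`, then the G-valued cumulants are invariant under cyclic permutation of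
arguments from `B`. -/
theorem grassmann_cumulant_cyclic_of_trace
    {A : Type*} [Ring A] [Algebra ℂ A]
    (φ : A →ₗ[ℂ] DualNumber ℂ) (hφ1 : φ 1 = 1)
    (κ : ∀ n : ℕ, (Fin n → A) → DualNumber ℂ)
    (hκ : MomentCumulant (⇑φ) κ)
    (B : Subalgebra ℂ A)
    (htrace : ∀ b ∈ B, ∀ c ∈ B, φ (b * c) = φ (c * b)) :
    ∀ (n : ℕ), 2 ≤ n → ∀ b : Fin n → A, (∀ m, b m ∈ B) →
      κ n b = κ n (fun m => b (finRotate n m)) :=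
  grassmann_cumulant_cyclic_of_trace_general φ κ hκ B htrace

end InfFree
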